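/- arXiv:2307.00970 — 4 statements merged into one kernel-verified Lean document; each statement's English description precedes it below -/
import Mathlib

section
/- Let r = 1 + √3 and s = 1/√(r² + 2). Then the point (a,b,c) = (r·s, s, s) satisfies a² + b² + c² = 1 and |D(r·s, s, s)| = √3/(2¹⁹·3¹⁴), i.e., this point attains the global maximum of |D| on the unit sphere. -/
/-- Restriction of the 3×3×3 hyperdeterminant to normalized semi-simple states
`a|v₁⟩ + b|v₂⟩ + c|v₃⟩`. -/
noncomputable def D (a b c : ℝ) : ℝ :=
  -(4 / 3 ^ 18) * a ^ 3 * b ^ 3 * c ^ 3 * (a + b + c) ^ 3 *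
    (a ^ 2 + 2 * a * b - a * c + b ^ 2 - b * c + c ^ 2) ^ 3 *
    (a ^ 2 - a * b + 2 * a * c + b ^ 2 - b * c + c ^ 2) ^ 3 *
    (a ^ 2 - a * b - a * c + b ^ 2 + 2 * b * c + c ^ 2) ^ 3 *
    (a ^ 2 - a * b - a * c + b ^ 2 - b * c + c ^ 2) ^ 3

lemma key_poly (t : ℝ) (ht : t ^ 2 = 3) (h18 : (6 + 2 * t) ^ 18 ≠ 0) :
    -(4 / 3 ^ 18) * ((1 + t) ^ 3 * ((1 + t) + 2) ^ 3 * ((1 + t) ^ 2 + (1 + t) + 1) ^ 6 *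
      ((1 + t) ^ 2 - 2 * (1 + t) + 4) ^ 3 * ((1 + t) - 1) ^ 6) * (1 / (6 + 2 * t)) ^ 18
      = -(t / (2 ^ 19 * 3 ^ 14)) := by
  rw [one_div, inv_pow, ← div_eq_mul_inv, div_eq_iff h18]
  linear_combination ((-27/2)*t^1 + (-81)*t^2 + (-234)*t^3 + (-435)*t^4 + (-588)*t^5 +
    (-1358123/2187)*t^6 + (-1180454/2187)*t^7 + (-2646415/6561)*t^8 + (-15924371/59049)*t^9 +
    (-3290389/19683)*t^10 + (-17498138/177147)*t^11 + (-123623/2187)*t^12 +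
    (-16702880/531441)*t^13 + (-2989021/177147)*t^14 + (-13788866/1594323)*t^15 +
    (-740275/177147)*t^16 + (-17977855/9565938)*t^17 + (-137668/177147)*t^18 +
    (-4188760/14348907)*t^19 + (-470408/4782969)*t^20 + (-1260976/43046721)*t^21 +
    (-4028/531441)*t^22 + (-215104/129140163)*t^23 + (-12980/43046721)*t^24 +
    (-16672/387420489)*t^25 + (-584/129140163)*t^26 + (-40/129140163)*t^27 +
    (-4/387420489)*t^28) * ht

/-- The point `(r·s, s, s)` with `r = 1 + √3`, `s = 1/√(r² + 2)` lies on the unit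
sphere and attains the global maximum `√3 / (2¹⁹ · 3¹⁴)` of `|D|`. -/
theorem D_attains_max :
    let r : ℝ := 1 + Real.sqrt 3
    let s : ℝ := 1 / Real.sqrt (r ^ 2 + 2)
    (r * s) ^ 2 + s ^ 2 + s ^ 2 = 1 ∧
      |D (r * s) s s| = Real.sqrt 3 / (2 ^ 19 * 3 ^ 14) := by
  intro r s
  set t : ℝ := Real.sqrt 3 with htdef
  have ht : t ^ 2 = 3 := Real.sq_sqrt (by norm_num)
  have ht0 : 0 ≤ t := Real.sqrt_nonneg 3
  have hr : r = 1 + t := rfl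
  have hr2 : r ^ 2 + 2 = 6 + 2 * t := by rw [hr]; linear_combination ht
  have hpos : (0:ℝ) < 6 + 2 * t := by linarith
  have hs2 : s ^ 2 = 1 / (6 + 2 * t) := by
    show (1 / Real.sqrt (r ^ 2 + 2)) ^ 2 = 1 / (6 + 2 * t)
    rw [div_pow, one_pow, Real.sq_sqrt (by rw [hr2]; linarith), hr2]
  have hfact : D (r * s) s s = -(4 / 3 ^ 18) * (r ^ 3 * (r + 2) ^ 3 *
      (r ^ 2 + r + 1) ^ 6 * (r ^ 2 - 2 * r + 4) ^ 3 * (r - 1) ^ 6) * (s ^ 2) ^ 18 := by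
    unfold D; ring
  have hDval : D (r * s) s s = -(t / (2 ^ 19 * 3 ^ 14)) := by
    have h18 : (6 + 2 * t) ^ 18 ≠ 0 := pow_ne_zero _ (ne_of_gt hpos)
    rw [hfact, hs2, hr]
    exact key_poly t ht h18
  constructor
  · have : (r * s) ^ 2 + s ^ 2 + s ^ 2 = (r ^ 2 + 2) * s ^ 2 := by ring
    rw [this, hr2, hs2]
    field_simp
  · rw [hDval, abs_neg, abs_div]
    rw [abs_of_nonneg ht0, abs_of_nonneg (by positivity)]
end

section
/- For all real numbers a, b, c with a² + b² + c² = 1, the absolute value of I₆(a,b,c) is at most 1/18. (This is the global maximum of the absolute value of the degree-6 fundamental SLOCC invariant restricted to real semi-simple 3-qutrit states.) -/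
/-- Restriction of the degree-6 fundamental invariant to normalized semi-simple states. -/
noncomputable def I₆ (a b c : ℝ) : ℝ :=
  (1 / 27) * (a ^ 6 - 10 * a ^ 3 * b ^ 3 - 10 * a ^ 3 * c ^ 3 + b ^ 6 -
    10 * b ^ 3 * c ^ 3 + c ^ 6)

/-- The global maximum of `|I₆|` on real semi-simple 3-qutrit states is `1/18`. -/
theorem abs_I₆_le (a b c : ℝ) (h : a ^ 2 + b ^ 2 + c ^ 2 = 1) :
    |I₆ a b c| ≤ 1 / 18 := by
  rw [abs_le, I₆]
  have hs : (a ^ 2 + b ^ 2 + c ^ 2) ^ 3 = 1 := by rw [h]; ring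
  constructor
  · nlinarith [sq_nonneg (a^3 - b^3), sq_nonneg (a^3 - c^3), sq_nonneg (b^3 - c^3),
      sq_nonneg (a^2*b - a*b^2), sq_nonneg (a^2*c - a*c^2), sq_nonneg (b^2*c - b*c^2),
      sq_nonneg (a^3 + b^3 + c^3), sq_nonneg (a*b*c)]
  · nlinarith [sq_nonneg (a^3 + b^3 + c^3),
      sq_nonneg (a^2*b + a*b^2), sq_nonneg (a^2*c + a*c^2), sq_nonneg (b^2*c + b*c^2),
      sq_nonneg (a*b*c)]
end

section
/- The point (a,b,c) = (1/√2, −1/√2, 0) satisfies a² + b² + c² = 1 and |I₆(1/√2, −1/√2, 0)| = 1/18, i.e., the state (|v₁⟩ − |v₂⟩)/√2 attains the global maximum of |I₆| on the unit sphere. -/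
lemma I₆_neg_zero (t : ℝ) : I₆ t (-t) 0 = 4 / 9 * (t ^ 2) ^ 3 := by
  unfold I₆
  ring

lemma one_div_sqrt_two_sq : (1 / Real.sqrt 2) ^ 2 = 1 / 2 := by
  rw [div_pow, Real.sq_sqrt zero_le_two, one_pow]

/-- The state `(|v₁⟩ - |v₂⟩)/√2` attains the global maximum `1/18` of `|I₆|`. -/
theorem I₆_attains_max :
    (1 / Real.sqrt 2) ^ 2 + (-(1 / Real.sqrt 2)) ^ 2 + (0 : ℝ) ^ 2 = 1 ∧
      |I₆ (1 / Real.sqrt 2) (-(1 / Real.sqrt 2)) 0| = 1 / 18 := by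
  constructor
  · rw [neg_sq, one_div_sqrt_two_sq]
    norm_num
  · rw [I₆_neg_zero, one_div_sqrt_two_sq]
    norm_num
end

section
/- For real numbers a, b, c with a² + b² + c² = 1, one has |I₆(a,b,c)| = 1/18 if and only if (a,b,c) is a permutation of (1/√2, −1/√2, 0) (equivalently, one coordinate is 0, one is 1/√2, and one is −1/√2). -/
/-- Schur's inequality (degree 1) for nonnegative reals. -/
theorem schur3_aux (x y z : ℝ) (hx : 0 ≤ x) (hy : 0 ≤ y) (hz : 0 ≤ z) :
    0 ≤ x*(x-y)*(x-z) + y*(y-x)*(y-z) + z*(z-x)*(z-y) := by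
  rcases le_total x y with h1 | h1 <;> rcases le_total y z with h2 | h2 <;>
    rcases le_total x z with h3 | h3 <;>
    nlinarith [mul_nonneg hx hy, mul_nonneg hy hz, mul_nonneg hx hz,
      sq_nonneg (x-y), sq_nonneg (y-z), sq_nonneg (x-z)]

open Polynomial in
theorem multiset_eq_of_esymm_aux (x y z u v w : ℝ)
    (h1 : x + y + z = u + v + w)
    (h2 : x*y + y*z + x*z = u*v + v*w + u*w)
    (h3 : x*y*z = u*v*w) :
    ({x, y, z} : Multiset ℝ) = {u, v, w} := by
  have c1 : (C x + C y + C z : ℝ[X]) = C u + C v + C w := by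
    have := congrArg (C : ℝ →+* ℝ[X]) h1; simpa [map_add] using this
  have c2 : (C x * C y + C y * C z + C x * C z : ℝ[X]) = C u * C v + C v * C w + C u * C w := by
    have := congrArg (C : ℝ →+* ℝ[X]) h2; simpa [map_add, map_mul] using this
  have c3 : (C x * C y * C z : ℝ[X]) = C u * C v * C w := by
    have := congrArg (C : ℝ →+* ℝ[X]) h3; simpa [map_mul] using this
  have hpoly : ((X - C x) * ((X - C y) * ((X - C z) * 1)) : ℝ[X]) =
      (X - C u) * ((X - C v) * ((X - C w) * 1)) := by
    linear_combination (-(X^2 : ℝ[X])) * c1 + (X : ℝ[X]) * c2 - c3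
  have hl := roots_multiset_prod_X_sub_C ({x, y, z} : Multiset ℝ)
  have hr := roots_multiset_prod_X_sub_C ({u, v, w} : Multiset ℝ)
  rw [show (({x, y, z} : Multiset ℝ).map fun a => X - C a).prod =
      (X - C x) * ((X - C y) * ((X - C z) * 1)) by
        simp [Multiset.insert_eq_cons], hpoly] at hl
  rw [show (({u, v, w} : Multiset ℝ).map fun a => X - C a).prod =
      (X - C u) * ((X - C v) * ((X - C w) * 1)) by
        simp [Multiset.insert_eq_cons]] at hr
  rw [← hl, ← hr]

/-- Two-variable equality case analysis. -/
theorem pairlem_aux (x y : ℝ) (h : x^2 + y^2 = 1)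
    (hG : x^6 - 10*x^3*y^3 + y^6 = 3/2) : x + y = 0 ∧ x*y = -1/2 := by
  have hv : (x*y + 1/2) * (10*(x*y)^2 - 2*(x*y) + 1) = 0 := by
    linear_combination ((x^2+y^2)^2 + (x^2+y^2) + 1 - 3*(x*y)^2) * h - hG
  have hpos : 10*(x*y)^2 - 2*(x*y) + 1 > 0 := by nlinarith [sq_nonneg (10*(x*y) - 1)]
  have hxy : x*y = -1/2 := by
    rcases mul_eq_zero.mp hv with h' | h'
    · linarith
    · linarith
  have hsq : (x + y)^2 = 0 := by linear_combination h + 2*hxy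
  exact ⟨pow_eq_zero_iff (n := 2) (by norm_num) |>.mp hsq, hxy⟩

/-- `|I₆| = 1/18` on the unit sphere exactly at permutations of `(1/√2, -1/√2, 0)`. -/
theorem abs_I₆_eq_max_iff (a b c : ℝ) (h : a ^ 2 + b ^ 2 + c ^ 2 = 1) :
    |I₆ a b c| = 1 / 18 ↔
      ({a, b, c} : Multiset ℝ) = {1 / Real.sqrt 2, -(1 / Real.sqrt 2), 0} := by
  have ht2 : (1 / Real.sqrt 2)^2 = (1:ℝ)/2 := by
    rw [div_pow, one_pow, Real.sq_sqrt (by norm_num : (0:ℝ) ≤ 2)]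
  have h3 : (a^2+b^2+c^2)^3 = 1 := by rw [h]; norm_num
  constructor
  · intro hI
    rcases (abs_eq (by norm_num : (0:ℝ) ≤ 1/18)).mp hI with h1 | h1
    · -- the maximum case
      have hG : a ^ 6 - 10 * a ^ 3 * b ^ 3 - 10 * a ^ 3 * c ^ 3 + b ^ 6 -
          10 * b ^ 3 * c ^ 3 + c ^ 6 = 3/2 := by
        have := h1
        unfold I₆ at this
        linear_combination 27 * this
      have hS := schur3_aux (a^2) (b^2) (c^2) (sq_nonneg a) (sq_nonneg b) (sq_nonneg c)
      have habc : a * b * c = 0 := by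
        have hle : (a*b*c)^2 ≤ 0 := by
          nlinarith [hS, sq_nonneg (a*b*(a+b)), sq_nonneg (b*c*(b+c)), sq_nonneg (a*c*(a+c))]
        exact pow_eq_zero_iff (n := 2) (by norm_num) |>.mp (le_antisymm hle (sq_nonneg _))
      rcases mul_eq_zero.mp habc with hab | hc
      · rcases mul_eq_zero.mp hab with ha | hb
        · -- a = 0
          subst ha
          obtain ⟨hs, hp⟩ := pairlem_aux b c (by linear_combination h) (by linear_combination hG)
          exact multiset_eq_of_esymm_aux _ _ _ _ _ _
            (by linear_combination hs) (by linear_combination hp + ht2) (by ring)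
        · -- b = 0
          subst hb
          obtain ⟨hs, hp⟩ := pairlem_aux a c (by linear_combination h) (by linear_combination hG)
          exact multiset_eq_of_esymm_aux _ _ _ _ _ _
            (by linear_combination hs) (by linear_combination hp + ht2) (by ring)
      · -- c = 0
        subst hc
        obtain ⟨hs, hp⟩ := pairlem_aux a b (by linear_combination h) (by linear_combination hG)
        exact multiset_eq_of_esymm_aux _ _ _ _ _ _
          (by linear_combination hs) (by linear_combination hp + ht2) (by ring)
    · -- the minimum case is impossible
      exfalso
      have hG : a ^ 6 - 10 * a ^ 3 * b ^ 3 - 10 * a ^ 3 * c ^ 3 + b ^ 6 -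
          10 * b ^ 3 * c ^ 3 + c ^ 6 = -(3/2) := by
        have := h1
        unfold I₆ at this
        linear_combination 27 * this
      have hS := schur3_aux (a^2) (b^2) (c^2) (sq_nonneg a) (sq_nonneg b) (sq_nonneg c)
      nlinarith [hS, sq_nonneg (a*b*(a-b)), sq_nonneg (b*c*(b-c)), sq_nonneg (a*c*(a-c))]
  · intro hm
    have hp3 : a^3 + b^3 + c^3 = 0 := by
      have h' := congrArg (fun m : Multiset ℝ => (m.map (fun r => r^3)).sum) hm
      simp [Multiset.insert_eq_cons] at h'
      linear_combination h'
    have hp6 : a^6 + b^6 + c^6 = 1/4 := by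
      have h' := congrArg (fun m : Multiset ℝ => (m.map (fun r => r^6)).sum) hm
      simp [Multiset.insert_eq_cons] at h'
      linear_combination h' + (2*(1/Real.sqrt 2)^4 + (1/Real.sqrt 2)^2 + 1/2) * ht2
    have : I₆ a b c = 1/18 := by
      unfold I₆
      linear_combination (6/27) * hp6 - (5/27) * (a^3 + b^3 + c^3) * hp3
    rw [this]
    norm_num
end
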